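/- Let n ≤ m and suppose (λ_{ij}) is an m×n nonnegative real matrix whose every row sums to 1/m and whose total sum is 1. Then the state ρ = ∑_{i=0}^{m−1} ∑_{j=0}^{n−1} λ_{ij} |ψ_{ij}⟩⟨ψ_{ij}| satisfies tr_B ρ = (1/n) I_n and tr_A ρ = (1/m) I_m, and rank ρ equals the number of nonzero entries of (λ_{ij}). -/

import Mathlib

open ComplexOrder

/-- `ω = e^{2πi/n}`, a primitive `n`-th root of unity. -/
noncomputable def omegaC (n : ℕ) : ℂ := Complex.exp (2 * Real.pi * Complex.I / n)

/-- The cyclic shift operator `X` on `ℂ^m`: `X |j⟩ = |j + 1 mod m⟩`. -/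
def shiftX (m : ℕ) [NeZero m] : Matrix (Fin m) (Fin m) ℂ :=
  fun i j => if i = j + 1 then 1 else 0

/-- The generalized clock operator `Z_n` on `ℂ^m`: `Z_n |i⟩ = ω^i |i⟩` with `ω = e^{2πi/n}`. -/
noncomputable def weylZ (n m : ℕ) : Matrix (Fin m) (Fin m) ℂ :=
  Matrix.diagonal fun i : Fin m => omegaC n ^ (i : ℕ)

/-- The maximally entangled state `|ψ₀₀⟩ = (1/√n) ∑_{s<n} |s⟩ ⊗ |s⟩` in `ℂ^n ⊗ ℂ^m`. -/
noncomputable def psi00 (n m : ℕ) : Fin n × Fin m → ℂ :=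
  fun p => if (p.1 : ℕ) = (p.2 : ℕ) then ((Real.sqrt n : ℝ)⁻¹ : ℂ) else 0

/-- Apply an operator `M` on `ℂ^m` to the second tensor factor of `ℂ^n ⊗ ℂ^m`. -/
noncomputable def applyB {n m : ℕ} (M : Matrix (Fin m) (Fin m) ℂ)
    (v : Fin n × Fin m → ℂ) : Fin n × Fin m → ℂ :=
  fun p => ∑ c : Fin m, M p.2 c * v (p.1, c)

/-- `|ψ_{ij}⟩ = (I_n ⊗ X^i Z_n^j) |ψ₀₀⟩`. -/
noncomputable def psiV (n m : ℕ) [NeZero m] (i : Fin m) (j : Fin n) :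
    Fin n × Fin m → ℂ :=
  applyB (shiftX m ^ (i : ℕ) * weylZ n m ^ (j : ℕ)) (psi00 n m)

/-- The rank-one projector `|v⟩⟨v|`. -/
noncomputable def proj {α : Type*} (v : α → ℂ) : Matrix α α ℂ :=
  fun p q => v p * star (v q)

/-- Partial trace over the second tensor factor. -/
noncomputable def trB {n m : ℕ} (ρ : Matrix (Fin n × Fin m) (Fin n × Fin m) ℂ) :
    Matrix (Fin n) (Fin n) ℂ :=
  fun a a' => ∑ b : Fin m, ρ (a, b) (a', b)

/-- Partial trace over the first tensor factor. -/
noncomputable def trA {n m : ℕ} (ρ : Matrix (Fin n × Fin m) (Fin n × Fin m) ℂ) :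
    Matrix (Fin m) (Fin m) ℂ :=
  fun b b' => ∑ a : Fin n, ρ (a, b) (a, b')

/-!
Explicitly, `ψ_{ij}(a, b) = [b = a + i] ω^{aj} / √n`, the sum `a + i` taken in `ℤ/m`. Tracing out
`B` therefore leaves `I_n / n` for every `ψ_{ij}`, while tracing out `A` leaves `1/n` times the
projection onto the window `{i, …, i + n - 1} ⊆ ℤ/m`; as `i` runs over `ℤ/m` these windows cover
every point exactly `n` times, so row sums `1/m` give `tr_A ρ = I_m / m`. By orthogonality of the
characters `a ↦ ω^{aj}` the `ψ_{ij}` are orthonormal, so `ρ = V diag(λ) V*` for an isometry `V`,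
and `ρ` has the rank of `diag(λ)`.
-/

open scoped Matrix

theorem IsPrimitiveRoot.sum_div_pow_pow {K : Type*} [Field K] {ζ : K} {n : ℕ}
    (hζ : IsPrimitiveRoot ζ n) {j l : ℕ} (hj : j < n) (hl : l < n) :
    ∑ a ∈ Finset.range n, (ζ ^ l / ζ ^ j) ^ a = if j = l then (n : K) else 0 := by
  have hζ0 : ζ ≠ 0 := hζ.ne_zero (by omega)
  split_ifs with hjl
  · simp [hjl, hζ0]
  · have hx : ζ ^ l / ζ ^ j ≠ 1 := fun h =>
      hjl (hζ.pow_inj hj hl (div_eq_one_iff_eq (pow_ne_zero _ hζ0) |>.mp h).symm)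
    rw [geom_sum_eq hx, div_pow, ← pow_mul, ← pow_mul, mul_comm l, mul_comm j, pow_mul,
      pow_mul, hζ.pow_eq_one]
    simp

theorem Fin.sum_ite_castLE_eq {M : Type*} [AddCommMonoid M] {n m : ℕ} (h : n ≤ m) (c : Fin m)
    (x : M) :
    ∑ a : Fin n, (if Fin.castLE h a = c then x else 0) = if (c : ℕ) < n then x else 0 := by
  split_ifs with hc
  · rw [Finset.sum_eq_single ⟨c, hc⟩ (fun a _ ha => if_neg fun hac => ha (Fin.ext (by
      simp [← hac]))) (by simp)]
    exact if_pos rfl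
  · refine Finset.sum_eq_zero fun a _ => if_neg ?_
    rintro rfl
    exact hc a.isLt

theorem Fin.sum_ite_val_lt {M : Type*} [AddCommMonoid M] {n m : ℕ} (h : n ≤ m) (x : M) :
    ∑ c : Fin m, (if (c : ℕ) < n then x else 0) = n • x := by
  simp only [← Fin.sum_ite_castLE_eq h]
  rw [Finset.sum_comm]
  simp

theorem Fin.sum_ite_sub_val_lt {M : Type*} [AddCommMonoid M] {n m : ℕ} [NeZero m] (h : n ≤ m)
    (b : Fin m) (x : M) : ∑ i : Fin m, (if ((b - i : Fin m) : ℕ) < n then x else 0) = n • x :=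
  (Fintype.sum_equiv (Equiv.subLeft b) _ _ fun _ => rfl).trans (Fin.sum_ite_val_lt h x)

theorem Matrix.rank_mul_mul_conjTranspose_of_conjTranspose_mul_self_eq_one {α β K : Type*}
    [Fintype α] [Fintype β] [DecidableEq β] [Field K] [StarRing K] {V : Matrix α β K}
    (hV : Vᴴ * V = 1) (A : Matrix β β K) :
    (V * A * Vᴴ).rank = A.rank := by
  refine le_antisymm ((rank_mul_le_left _ _).trans (rank_mul_le_right _ _)) ?_
  calc A.rank = (Vᴴ * (V * A * Vᴴ) * V).rank := by
        rw [show Vᴴ * (V * A * Vᴴ) * V = Vᴴ * V * A * (Vᴴ * V) by simp only [Matrix.mul_assoc],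
          hV, Matrix.one_mul, Matrix.mul_one]
    _ ≤ (V * A * Vᴴ).rank := (rank_mul_le_left _ _).trans (rank_mul_le_right _ _)

theorem sum_smul_proj_eq_mul_diagonal_mul_conjTranspose {α β : Type*} [Fintype α] [Fintype β]
    [DecidableEq β] (c : β → ℂ) (v : β → α → ℂ) :
    ∑ q, c q • proj (v q) = Matrix.of (fun p q => v q p) * Matrix.diagonal c *
      (Matrix.of fun p q => v q p)ᴴ := by
  ext p p'
  rw [Matrix.mul_apply]
  simp only [Matrix.sum_apply, Matrix.smul_apply, proj, Matrix.mul_diagonal, Matrix.of_apply,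
    Matrix.conjTranspose_apply, smul_eq_mul]
  exact Finset.sum_congr rfl fun _ _ => by ring

section Partial

variable {n m : ℕ}

theorem trB_sum {ι : Type*} (s : Finset ι) (f : ι → Matrix (Fin n × Fin m) (Fin n × Fin m) ℂ) :
    trB (∑ x ∈ s, f x) = ∑ x ∈ s, trB (f x) := by
  ext a a'
  simp only [trB, Matrix.sum_apply]
  exact Finset.sum_comm

theorem trA_sum {ι : Type*} (s : Finset ι) (f : ι → Matrix (Fin n × Fin m) (Fin n × Fin m) ℂ) :
    trA (∑ x ∈ s, f x) = ∑ x ∈ s, trA (f x) := by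
  ext b b'
  simp only [trA, Matrix.sum_apply]
  exact Finset.sum_comm

theorem trB_smul (c : ℂ) (ρ : Matrix (Fin n × Fin m) (Fin n × Fin m) ℂ) :
    trB (c • ρ) = c • trB ρ := by
  ext a a'
  simp [trB, Finset.mul_sum]

theorem trA_smul (c : ℂ) (ρ : Matrix (Fin n × Fin m) (Fin n × Fin m) ℂ) :
    trA (c • ρ) = c • trA ρ := by
  ext b b'
  simp [trA, Finset.mul_sum]

end Partial

theorem omegaC_ne_zero (n : ℕ) : omegaC n ≠ 0 :=
  Complex.exp_ne_zero _

theorem star_omegaC (n : ℕ) : star (omegaC n) = (omegaC n)⁻¹ :=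
  (Complex.inv_eq_conj (by simp [omegaC, Complex.norm_exp])).symm

theorem ofReal_sqrt_inv_mul_self (n : ℕ) :
    ((Real.sqrt n : ℝ)⁻¹ : ℂ) * ((Real.sqrt n : ℝ)⁻¹ : ℂ) = (n : ℂ)⁻¹ := by
  rw [← mul_inv, ← Complex.ofReal_mul, Real.mul_self_sqrt (Nat.cast_nonneg n),
    Complex.ofReal_natCast]

noncomputable def weylCoeff (n a j : ℕ) : ℂ :=
  omegaC n ^ (a * j) * ((Real.sqrt n : ℝ)⁻¹ : ℂ)

theorem star_weylCoeff_mul_weylCoeff (n a j l : ℕ) :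
    star (weylCoeff n a j) * weylCoeff n a l =
      (omegaC n ^ l / omegaC n ^ j) ^ a * (n : ℂ)⁻¹ := by
  rw [weylCoeff, weylCoeff, ← ofReal_sqrt_inv_mul_self, star_mul', star_pow, star_omegaC,
    star_inv₀, Complex.star_def, Complex.conj_ofReal, div_pow, ← pow_mul, ← pow_mul, inv_pow,
    mul_comm j, mul_comm l]
  ring

theorem weylCoeff_mul_star_self (n a j : ℕ) :
    weylCoeff n a j * star (weylCoeff n a j) = (n : ℂ)⁻¹ := by
  rw [mul_comm, star_weylCoeff_mul_weylCoeff, div_self (pow_ne_zero _ (omegaC_ne_zero n)),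
    one_pow, one_mul]

section Weyl

variable {n m : ℕ}

theorem weylZ_pow (j : ℕ) :
    weylZ n m ^ j = Matrix.diagonal fun c : Fin m => omegaC n ^ ((c : ℕ) * j) := by
  simp [weylZ, Matrix.diagonal_pow, pow_mul]

variable [NeZero m]

theorem shiftX_pow_apply (k : ℕ) (b c : Fin m) :
    (shiftX m ^ k) b c = if (b : ℕ) = ((c : ℕ) + k) % m then 1 else 0 := by
  induction k generalizing c with
  | zero => simp [Matrix.one_apply, Fin.ext_iff, Nat.mod_eq_of_lt c.isLt]
  | succ k ih =>
    rw [pow_succ, Matrix.mul_apply, Finset.sum_eq_single (c + 1) (fun d _ hd => by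
      simp [shiftX, hd]) (by simp), ih]
    simp [shiftX, Fin.val_add, Nat.add_mod_mod, Nat.add_right_comm _ 1 k, add_assoc]

theorem psiV_apply (hnm : n ≤ m) (i : Fin m) (j : Fin n) (a : Fin n) (b : Fin m) :
    psiV n m i j (a, b) = if b = Fin.castLE hnm a + i then weylCoeff n a j else 0 := by
  rw [psiV, applyB, Finset.sum_eq_single (Fin.castLE hnm a)]
  · simp [weylCoeff, weylZ_pow, Matrix.mul_diagonal, shiftX_pow_apply, psi00, Fin.ext_iff,
      Fin.val_add]
  · intro c _ hc
    have hac : (a : ℕ) ≠ c := fun h => hc (Fin.ext h.symm)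
    simp [psi00, hac]
  · simp

theorem sum_star_psiV_mul_psiV (hnm : n ≤ m) (i k : Fin m) (j l : Fin n) :
    ∑ p, star (psiV n m i j p) * psiV n m k l p = if (i, j) = (k, l) then 1 else 0 := by
  have hω : IsPrimitiveRoot (omegaC n) n := Complex.isPrimitiveRoot_exp n j.pos.ne'
  rw [Fintype.sum_prod_type]
  simp only [psiV_apply hnm, apply_ite star, star_zero, ite_mul, mul_ite, zero_mul, mul_zero,
    Finset.sum_ite_eq', Finset.mem_univ, if_true, add_right_inj, star_weylCoeff_mul_weylCoeff,
    Prod.mk.injEq]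
  by_cases hik : i = k
  · subst hik
    simp only [if_true, true_and]
    rw [← Finset.sum_mul, Fin.sum_univ_eq_sum_range (fun a => (omegaC n ^ (l : ℕ) /
      omegaC n ^ (j : ℕ)) ^ a) n, hω.sum_div_pow_pow j.isLt l.isLt]
    simp only [Fin.val_inj]
    split_ifs
    · exact mul_inv_cancel₀ (Nat.cast_ne_zero.mpr j.pos.ne')
    · exact zero_mul _
  · simp [Ne.symm hik, hik]

theorem trB_proj_psiV (hnm : n ≤ m) (i : Fin m) (j : Fin n) :
    trB (proj (psiV n m i j)) = (n : ℂ)⁻¹ • 1 := by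
  ext a a'
  simp only [trB, proj, psiV_apply hnm, apply_ite star, star_zero, ite_mul, mul_ite, zero_mul,
    mul_zero, Finset.sum_ite_eq', Finset.mem_univ, if_true, add_left_inj,
    (Fin.castLE_injective hnm).eq_iff]
  by_cases h : a' = a
  · subst h
    rw [if_pos rfl, weylCoeff_mul_star_self, Matrix.smul_apply, Matrix.one_apply_eq, smul_eq_mul,
      mul_one]
  · simp [h, Matrix.one_apply_ne (Ne.symm h)]

theorem trA_proj_psiV (hnm : n ≤ m) (i : Fin m) (j : Fin n) :
    trA (proj (psiV n m i j)) =
      Matrix.diagonal fun b => if ((b - i : Fin m) : ℕ) < n then (n : ℂ)⁻¹ else 0 := by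
  ext b b'
  simp only [trA, proj, psiV_apply hnm, apply_ite star, star_zero, ite_mul, mul_ite, zero_mul,
    mul_zero]
  by_cases h : b = b'
  · subst h
    have hb : ∀ a : Fin n, b = Fin.castLE hnm a + i ↔ Fin.castLE hnm a = b - i :=
      fun a => eq_comm.trans eq_sub_iff_add_eq.symm
    rw [Matrix.diagonal_apply_eq, ← Fin.sum_ite_castLE_eq hnm]
    refine Finset.sum_congr rfl fun a _ => ?_
    simp only [hb, weylCoeff_mul_star_self]
    split_ifs <;> rfl
  · refine (Finset.sum_eq_zero fun a _ => ?_).trans (Matrix.diagonal_apply_ne _ h).symm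
    split_ifs with h1 h2
    · exact absurd (h2.trans h1.symm) h
    all_goals rfl

theorem sum_diagonal_ite_sub_val_lt [NeZero n] (hnm : n ≤ m) :
    ∑ i : Fin m,
      Matrix.diagonal (fun b : Fin m => if ((b - i : Fin m) : ℕ) < n then (n : ℂ)⁻¹ else 0) = 1 := by
  ext b b'
  by_cases h : b = b'
  · subst h
    simp [Matrix.sum_apply, Fin.sum_ite_sub_val_lt hnm]
  · simp [Matrix.sum_apply, h]

end Weyl

noncomputable def psiFrame (n m : ℕ) [NeZero m] : Matrix (Fin n × Fin m) (Fin m × Fin n) ℂ :=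
  Matrix.of fun p q => psiV n m q.1 q.2 p

theorem conjTranspose_psiFrame_mul_self {n m : ℕ} [NeZero m] (hnm : n ≤ m) :
    (psiFrame n m)ᴴ * psiFrame n m = 1 := by
  ext q q'
  simpa [psiFrame, Matrix.mul_apply, Matrix.one_apply] using
    sum_star_psiV_mul_psiV hnm q.1 q'.1 q.2 q'.2

theorem weyl_construction_general_general (n m : ℕ) [NeZero n] [NeZero m] (hnm : n ≤ m)
    (lam : Fin m → Fin n → ℝ)
    (hrow : ∀ i : Fin m, ∑ j, lam i j = (m : ℝ)⁻¹)
    (htot : ∑ i : Fin m, ∑ j : Fin n, lam i j = 1)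
    (ρ : Matrix (Fin n × Fin m) (Fin n × Fin m) ℂ)
    (hρ : ρ = ∑ i : Fin m, ∑ j : Fin n, (lam i j : ℂ) • proj (psiV n m i j)) :
    trB ρ = ((n : ℂ))⁻¹ • (1 : Matrix (Fin n) (Fin n) ℂ) ∧
      trA ρ = ((m : ℂ))⁻¹ • (1 : Matrix (Fin m) (Fin m) ℂ) ∧
      ρ.rank = (Finset.univ.filter fun q : Fin m × Fin n => lam q.1 q.2 ≠ 0).card := by
  have hrowC : ∀ i, ∑ j, (lam i j : ℂ) = (m : ℂ)⁻¹ := fun i => by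
    simpa using congrArg Complex.ofReal (hrow i)
  have htotC : ∑ i, ∑ j, (lam i j : ℂ) = 1 := by exact_mod_cast htot
  refine ⟨?_, ?_, ?_⟩
  · simp only [hρ, trB_sum, trB_smul, trB_proj_psiV hnm, ← Finset.sum_smul, htotC, one_smul]
  · simp only [hρ, trA_sum, trA_smul, trA_proj_psiV hnm, ← Finset.sum_smul, hrowC]
    rw [← Finset.smul_sum, sum_diagonal_ite_sub_val_lt hnm]
  · have hρV : ρ = psiFrame n m * Matrix.diagonal (fun q : Fin m × Fin n => (lam q.1 q.2 : ℂ)) *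
        (psiFrame n m)ᴴ := by
      rw [hρ, ← Fintype.sum_prod_type', sum_smul_proj_eq_mul_diagonal_mul_conjTranspose]
      rfl
    rw [hρV, Matrix.rank_mul_mul_conjTranspose_of_conjTranspose_mul_self_eq_one
      (conjTranspose_psiFrame_mul_self hnm), Matrix.rank_diagonal, Fintype.card_subtype]
    simp

/-- let `(λ_{ij})` be an `m × n` nonnegative matrix with every row summing
to `1/m` (hence total sum `1`). Then `ρ = ∑_{i,j} λ_{ij} |ψ_{ij}⟩⟨ψ_{ij}|` has margins
`(1/n) I_n` and `(1/m) I_m`, and its rank equals the number of nonzero entries. -/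
theorem weyl_construction_general (n m : ℕ) [NeZero n] [NeZero m] (hnm : n ≤ m)
    (lam : Fin m → Fin n → ℝ) (hlam : ∀ i j, 0 ≤ lam i j)
    (hrow : ∀ i : Fin m, ∑ j, lam i j = (m : ℝ)⁻¹)
    (htot : ∑ i : Fin m, ∑ j : Fin n, lam i j = 1)
    (ρ : Matrix (Fin n × Fin m) (Fin n × Fin m) ℂ)
    (hρ : ρ = ∑ i : Fin m, ∑ j : Fin n, (lam i j : ℂ) • proj (psiV n m i j)) :
    trB ρ = ((n : ℂ))⁻¹ • (1 : Matrix (Fin n) (Fin n) ℂ) ∧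
      trA ρ = ((m : ℂ))⁻¹ • (1 : Matrix (Fin m) (Fin m) ℂ) ∧
      ρ.rank = (Finset.univ.filter fun q : Fin m × Fin n => lam q.1 q.2 ≠ 0).card :=
  weyl_construction_general_general n m hnm lam hrow htot ρ hρ
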